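/- Let (t, [·,·], r) be a finite-dimensional complex Lie algebra with r ∈ Λ²t a nondegenerate solution of the classical Yang–Baxter equation, with cobracket δ(x) := [x⊗1 + 1⊗x, r]. Then ker δ = {x ∈ t : [x⊗1 + 1⊗x, r] = 0} is a Lie subalgebra of t of dimension equal to dim(t/[t,t]). -/

import Mathlib

open TensorProduct

noncomputable section

variable {t : Type} [LieRing t] [LieAlgebra ℂ t]

attribute [local instance 100] LieRing.ofAssociativeRing

/-- The bracket `t ⊗ t →ₗ t`, `x ⊗ y ↦ ⁅x, y⁆`. -/
def brkt : t ⊗[ℂ] t →ₗ[ℂ] t :=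
  TensorProduct.lift (LieAlgebra.ad ℂ t).toLinearMap

/-- The cobracket `δ(x) = [x ⊗ 1 + 1 ⊗ x, r] = (ad x ⊗ id + id ⊗ ad x)(r)`. -/
def cobracket (r : t ⊗[ℂ] t) : t →ₗ[ℂ] t ⊗[ℂ] t :=
  (((LinearMap.rTensorHom t + LinearMap.lTensorHom t)
      ∘ₗ (LieAlgebra.ad ℂ t).toLinearMap).flip) r

/-- `(a ⊗ b) ⊗ (a' ⊗ b') ↦ ⁅a,a'⁆ ⊗ b ⊗ b'`, giving `[r₁₂, r₁₃]` on `r ⊗ r`. -/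
def c1213 : (t ⊗[ℂ] t) ⊗[ℂ] (t ⊗[ℂ] t) →ₗ[ℂ] t ⊗[ℂ] (t ⊗[ℂ] t) :=
  TensorProduct.map brkt LinearMap.id
    ∘ₗ (TensorProduct.tensorTensorTensorComm ℂ t t t t).toLinearMap

/-- `(a ⊗ b) ⊗ (a' ⊗ b') ↦ a ⊗ ⁅b,a'⁆ ⊗ b'`, giving `[r₁₂, r₂₃]` on `r ⊗ r`. -/
def c1223 : (t ⊗[ℂ] t) ⊗[ℂ] (t ⊗[ℂ] t) →ₗ[ℂ] t ⊗[ℂ] (t ⊗[ℂ] t) :=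
  TensorProduct.map LinearMap.id
      (TensorProduct.map brkt LinearMap.id
        ∘ₗ (TensorProduct.assoc ℂ t t t).symm.toLinearMap)
    ∘ₗ (TensorProduct.assoc ℂ t t (t ⊗[ℂ] t)).toLinearMap

/-- `(a ⊗ b) ⊗ (a' ⊗ b') ↦ a ⊗ a' ⊗ ⁅b,b'⁆`, giving `[r₁₃, r₂₃]` on `r ⊗ r`. -/
def c1323 : (t ⊗[ℂ] t) ⊗[ℂ] (t ⊗[ℂ] t) →ₗ[ℂ] t ⊗[ℂ] (t ⊗[ℂ] t) :=
  (TensorProduct.assoc ℂ t t t).toLinearMap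
    ∘ₗ TensorProduct.map LinearMap.id brkt
    ∘ₗ (TensorProduct.tensorTensorTensorComm ℂ t t t t).toLinearMap

/-! Write `ρ : t* → t` for `r` viewed as a map. Pairing the cobracket with `α ⊗ β`, skew-symmetry
and the classical Yang–Baxter equation (which says that the form `ω = r⁻¹` is a 2-cocycle) give
`⟨α ⊗ β, δ (ρ ξ)⟩ = -ξ ⁅ρ α, ρ β⁆`. As `ρ` is onto, `ρ ξ ∈ ker δ` exactly when `ξ` vanishes on
`[t, t]`, so the bijection `ρ` carries the annihilator of `[t, t]` onto `ker δ`, and that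
annihilator has dimension `dim (t/[t, t])`. That `ker δ` is a subalgebra holds for any `r`: `δ` is
the 1-cocycle `x ↦ ⁅x, r⁆` of `t` with values in the module `t ⊗ t`. -/

open Module

section Contraction

variable {R M : Type*} [CommRing R] [AddCommGroup M] [Module R M]

/-- `u ∈ M ⊗ M` as the map `M* → M`, `α ↦ (α ⊗ id) u`; for `u = r` this is the map in `nondeg`. -/
def leftContract : M ⊗[R] M →ₗ[R] Dual R M →ₗ[R] M :=
  (LinearMap.rTensorHom M).flip.compr₂ (TensorProduct.lid R M).toLinearMap

@[simp]
lemma leftContract_tmul (a b : M) (α : Dual R M) : leftContract (a ⊗ₜ b) α = α a • b := by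
  simp [leftContract]

lemma eq_zero_of_forall_dualDistrib_tmul [Module.Free R M] [Module.Finite R M] (u : M ⊗[R] M)
    (h : ∀ α β : Dual R M, dualDistrib R M M (α ⊗ₜ β) u = 0) : u = 0 := by
  refine (Module.forall_dual_apply_eq_zero_iff R u).mp fun f => ?_
  obtain ⟨w, rfl⟩ := (dualDistribEquiv R M M).surjective f
  induction w with
  | zero => simp
  | tmul α β => exact h α β
  | add w₁ w₂ h₁ h₂ => simp_all [dualDistribEquiv]

end Contraction

lemma cobracket_eq_lie (r : t ⊗[ℂ] t) (x : t) : cobracket r x = ⁅x, r⁆ := by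
  induction r with
  | zero => simp [cobracket]
  | tmul a b => simp [cobracket, LieModule.lie_tmul_right]
  | add u v hu hv => rw [lie_add, ← hu, ← hv]; simp [cobracket]

lemma cobracket_lie (r : t ⊗[ℂ] t) (x y : t) :
    cobracket r ⁅x, y⁆ = ⁅x, cobracket r y⁆ - ⁅y, cobracket r x⁆ := by
  simp only [cobracket_eq_lie, lie_lie]

lemma dualDistrib_tmul_lie (α β : Dual ℂ t) (x : t) (u : t ⊗[ℂ] t) :
    dualDistrib ℂ t t (α ⊗ₜ β) ⁅x, u⁆ =
      α ⁅x, leftContract (TensorProduct.comm ℂ t t u) β⁆ + β ⁅x, leftContract u α⁆ := by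
  induction u with
  | zero => simp
  | tmul a b => simp [LieModule.lie_tmul_right]; ring
  | add u v hu hv => simp_all [lie_add]; ring

lemma dualDistrib_c1213 (α β γ : Dual ℂ t) (u v : t ⊗[ℂ] t) :
    dualDistrib ℂ t (t ⊗[ℂ] t) (α ⊗ₜ dualDistrib ℂ t t (β ⊗ₜ γ)) (c1213 (u ⊗ₜ v)) =
      α ⁅leftContract (TensorProduct.comm ℂ t t u) β,
        leftContract (TensorProduct.comm ℂ t t v) γ⁆ := by
  induction u with
  | zero => simp
  | add u w hu hw => simp only [add_tmul, map_add, hu, hw, add_lie, LinearMap.add_apply]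
  | tmul a b =>
    induction v with
    | zero => simp
    | add v w hv hw => simp only [tmul_add, map_add, hv, hw, lie_add, LinearMap.add_apply]
    | tmul a' b' => simp [c1213, brkt]; ring

lemma dualDistrib_c1223 (α β γ : Dual ℂ t) (u v : t ⊗[ℂ] t) :
    dualDistrib ℂ t (t ⊗[ℂ] t) (α ⊗ₜ dualDistrib ℂ t t (β ⊗ₜ γ)) (c1223 (u ⊗ₜ v)) =
      β ⁅leftContract u α, leftContract (TensorProduct.comm ℂ t t v) γ⁆ := by
  induction u with
  | zero => simp
  | add u w hu hw => simp only [add_tmul, map_add, hu, hw, add_lie, LinearMap.add_apply]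
  | tmul a b =>
    induction v with
    | zero => simp
    | add v w hv hw => simp only [tmul_add, map_add, hv, hw, lie_add, LinearMap.add_apply]
    | tmul a' b' => simp [c1223, brkt]; ring

lemma dualDistrib_c1323 (α β γ : Dual ℂ t) (u v : t ⊗[ℂ] t) :
    dualDistrib ℂ t (t ⊗[ℂ] t) (α ⊗ₜ dualDistrib ℂ t t (β ⊗ₜ γ)) (c1323 (u ⊗ₜ v)) =
      γ ⁅leftContract u α, leftContract v β⁆ := by
  induction u with
  | zero => simp
  | add u w hu hw => simp only [add_tmul, map_add, hu, hw, add_lie, LinearMap.add_apply]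
  | tmul a b =>
    induction v with
    | zero => simp
    | add v w hv hw => simp only [tmul_add, map_add, hv, hw, lie_add, LinearMap.add_apply]
    | tmul a' b' => simp [c1323, brkt]; ring

section Triangular

variable {r : t ⊗[ℂ] t} (skew : TensorProduct.comm ℂ t t r = -r)
  (cybe : c1213 (r ⊗ₜ[ℂ] r) + c1223 (r ⊗ₜ[ℂ] r) + c1323 (r ⊗ₜ[ℂ] r) = 0)
include skew cybe

lemma cybe_pairing (α β γ : Dual ℂ t) :
    α ⁅leftContract r β, leftContract r γ⁆ - β ⁅leftContract r α, leftContract r γ⁆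
      + γ ⁅leftContract r α, leftContract r β⁆ = 0 := by
  have h := congr_arg (dualDistrib ℂ t (t ⊗[ℂ] t) (α ⊗ₜ dualDistrib ℂ t t (β ⊗ₜ γ))) cybe
  rw [map_add, map_add, dualDistrib_c1213, dualDistrib_c1223, dualDistrib_c1323, skew,
    map_neg, map_zero] at h
  simp only [map_neg, LinearMap.neg_apply, lie_neg, neg_lie, neg_neg] at h
  linear_combination h

lemma dualDistrib_cobracket_leftContract (ξ α β : Dual ℂ t) :
    dualDistrib ℂ t t (α ⊗ₜ β) (cobracket r (leftContract r ξ)) =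
      -ξ ⁅leftContract r α, leftContract r β⁆ := by
  rw [cobracket_eq_lie, dualDistrib_tmul_lie, skew, map_neg, LinearMap.neg_apply, lie_neg,
    map_neg]
  linear_combination cybe_pairing skew cybe ξ α β

lemma leftContract_mem_ker_cobracket_iff [FiniteDimensional ℂ t] (ξ : Dual ℂ t) :
    leftContract r ξ ∈ LinearMap.ker (cobracket r) ↔
      ∀ α β : Dual ℂ t, ξ ⁅leftContract r α, leftContract r β⁆ = 0 := by
  simp only [LinearMap.mem_ker]
  constructor
  · intro h α β
    simpa [h] using (dualDistrib_cobracket_leftContract skew cybe ξ α β).symm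
  · intro h
    exact eq_zero_of_forall_dualDistrib_tmul _ fun α β => by
      rw [dualDistrib_cobracket_leftContract skew cybe, h, neg_zero]

lemma ker_cobracket_eq_map_dualAnnihilator [FiniteDimensional ℂ t]
    (hsurj : Function.Surjective (leftContract r)) :
    LinearMap.ker (cobracket r) =
      (Submodule.span ℂ {x : t | ∃ a b : t, ⁅a, b⁆ = x}).dualAnnihilator.map (leftContract r) := by
  have mem_iff (ξ : Dual ℂ t) :
      ξ ∈ (Submodule.span ℂ {x : t | ∃ a b : t, ⁅a, b⁆ = x}).dualAnnihilator ↔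
        leftContract r ξ ∈ LinearMap.ker (cobracket r) := by
    rw [leftContract_mem_ker_cobracket_iff skew cybe, ← SetLike.mem_coe,
      Submodule.coe_dualAnnihilator_span]
    simp only [Set.mem_ofPred_eq, Set.subset_def, SetLike.mem_coe, LinearMap.mem_ker,
      forall_exists_index]
    refine ⟨fun h α β => h _ _ _ rfl, ?_⟩
    rintro h _ a b rfl
    obtain ⟨α, rfl⟩ := hsurj a
    obtain ⟨β, rfl⟩ := hsurj b
    exact h α β
  ext x
  constructor
  · intro hx
    obtain ⟨ξ, rfl⟩ := hsurj x
    exact ⟨ξ, (mem_iff ξ).2 hx, rfl⟩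
  · rintro ⟨ξ, hξ, rfl⟩
    exact (mem_iff ξ).1 hξ

end Triangular

theorem ker_cobracket_subalgebra_dim [FiniteDimensional ℂ t]
    (r : t ⊗[ℂ] t)
    (skew : (TensorProduct.comm ℂ t t) r = - r)
    (cybe : c1213 (r ⊗ₜ[ℂ] r) + c1223 (r ⊗ₜ[ℂ] r) + c1323 (r ⊗ₜ[ℂ] r) = 0)
    (nondeg : Function.Bijective
      (fun α : Module.Dual ℂ t => (TensorProduct.lid ℂ t) (LinearMap.rTensor t α r))) :
    (∀ x y : t, x ∈ LinearMap.ker (cobracket r) → y ∈ LinearMap.ker (cobracket r) →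
      ⁅x, y⁆ ∈ LinearMap.ker (cobracket r))
    ∧ Module.finrank ℂ (LinearMap.ker (cobracket r))
        = Module.finrank ℂ (t ⧸ Submodule.span ℂ {x : t | ∃ a b : t, ⁅a, b⁆ = x}) := by
  refine ⟨fun x y hx hy => ?_, ?_⟩
  · rw [LinearMap.mem_ker] at hx hy ⊢
    rw [cobracket_lie, hx, hy, lie_zero, lie_zero, sub_zero]
  · have hbij : Function.Bijective (leftContract r) := nondeg
    rw [ker_cobracket_eq_map_dualAnnihilator skew cybe hbij.2,
      ← (Submodule.equivMapOfInjective _ hbij.1 _).finrank_eq]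
    exact (Subspace.quotEquivAnnihilator _).finrank_eq.symm
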